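/- Let B be an ℓ×n real matrix, 1 ≤ k ≤ ℓ ≤ n, and let L = [[L₁₁, 0], [L₂₁, L₂₂]] be a lower triangular matrix orthogonally equivalent to B (i.e., B = Q L Pᵀ with Q, P orthogonal), with L₁₁ of size k×k. If γ = σ_min(L₁₁), ρ = ‖L₂₂‖₂/γ < 1, then σ_j(L₁₁)/σ_j(B) ≥ (1 - ‖L₂₁‖₂²/((1-ρ²)γ²))^{1/2} for 1 ≤ j ≤ k, provided ‖L₂₁‖₂² < (1-ρ²)γ². -/

import Mathlib

open Matrix

noncomputable def sv {m n : ℕ} (A : Matrix (Fin m) (Fin n) ℝ) (j : Fin n) : ℝ :=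
  Real.sqrt
    ((Matrix.isHermitian_conjTranspose_mul_self A).eigenvalues
      (Tuple.sort (Matrix.isHermitian_conjTranspose_mul_self A).eigenvalues (Fin.rev j)))

noncomputable def specNorm {m n : ℕ} (A : Matrix (Fin m) (Fin n) ℝ) : ℝ := ⨆ j, sv A j

noncomputable def smin {k : ℕ} (M : Matrix (Fin k) (Fin k) ℝ) : ℝ := ⨅ j, sv M j

/-!
By Courant–Fischer, `σ_j(A)² ≤ c` as soon as `‖A x‖² ≤ c ‖x‖²` on a subspace of codimension `j`,
and `c ≤ σ_j(A)²` as soon as `c ‖x‖² ≤ ‖A x‖²` on a subspace of dimension `j + 1`.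
Orthogonal factors do not change `‖A x‖`, so `σ_j(B) = σ_j(L)`, and testing `L` on the first block
gives `σ_j(L) ≥ σ_j(L₁₁) ≥ γ > 0`. For the upper bound take the vectors `x = (x₁, x₂)` with `x₁`
in the span of the right singular vectors of `L₁₁` from index `j` on: there
`‖L x‖² = ‖L₁₁ x₁‖² + ‖L₂₁ x₁ + L₂₂ x₂‖² ≤ σ_j(L₁₁)² ‖x₁‖² + (‖L₂₁‖ ‖x₁‖ + ‖L₂₂‖ ‖x₂‖)²`,
and an elementary quadratic inequality bounds this by
`σ_j(L₁₁)² (γ² - ‖L₂₂‖²) / (γ² - ‖L₂₂‖² - ‖L₂₁‖²) · ‖x‖²`, which is the claim since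
`(1 - ρ²) γ² = γ² - ‖L₂₂‖²`.
-/

open Module Submodule
open scoped InnerProductSpace RealInnerProductSpace

theorem Submodule.exists_ne_zero_mem_of_finrank_lt {K V : Type*} [DivisionRing K] [AddCommGroup V]
    [Module K V] [FiniteDimensional K V] {S T : Submodule K V}
    (h : finrank K V < finrank K S + finrank K T) : ∃ x ∈ S, x ∈ T ∧ x ≠ 0 := by
  by_contra! hST
  exact h.not_ge (finrank_add_finrank_le_of_disjoint (disjoint_def.mpr hST))

theorem sq_mul_add_sq_le {σ γ η β t u : ℝ} (hσ : γ ^ 2 ≤ σ ^ 2) (h : η ^ 2 < γ ^ 2 - β ^ 2) :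
    σ ^ 2 * t ^ 2 + (η * t + β * u) ^ 2 ≤
      σ ^ 2 * (γ ^ 2 - β ^ 2) / (γ ^ 2 - β ^ 2 - η ^ 2) * (t ^ 2 + u ^ 2) := by
  have hD : 0 < γ ^ 2 - β ^ 2 - η ^ 2 := by linarith
  rw [div_mul_eq_mul_div, le_div_iff₀ hD]
  -- With `c = γ² - β²` and `D = c - η²`:
  -- `γ² (η² t² + c u²) - D (η t + β u)² = (η β t - D u)² + η⁴ t² + η² (c + β² + D) u²`.
  have h₁ : 0 ≤ (σ ^ 2 - γ ^ 2) * (η ^ 2 * t ^ 2 + (γ ^ 2 - β ^ 2) * u ^ 2) := by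
    have : 0 ≤ γ ^ 2 - β ^ 2 := by nlinarith
    exact mul_nonneg (sub_nonneg.2 hσ) (by positivity)
  have h₂ : 0 ≤ η ^ 2 * (2 * γ ^ 2 - β ^ 2 - η ^ 2) * u ^ 2 := by
    have : 0 ≤ 2 * γ ^ 2 - β ^ 2 - η ^ 2 := by nlinarith
    positivity
  linear_combination
    h₁ + h₂ + sq_nonneg (η * β * t - (γ ^ 2 - β ^ 2 - η ^ 2) * u) + sq_nonneg (η ^ 2 * t)

theorem sqrt_one_sub_div_le_div {a b c d : ℝ} (ha : 0 ≤ a) (hb : 0 < b) (hd : 0 ≤ d) (hdc : d < c)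
    (h : b ^ 2 ≤ a ^ 2 * c / (c - d)) : √(1 - d / c) ≤ a / b := by
  have hc : 0 < c := hd.trans_lt hdc
  rw [Real.sqrt_le_left (div_nonneg ha hb.le), div_pow, le_div_iff₀ (by positivity),
    one_sub_div hc.ne', div_mul_eq_mul_div, div_le_iff₀ hc]
  rwa [le_div_iff₀ (sub_pos.2 hdc), mul_comm] at h

namespace OrthonormalBasis

variable {ι E : Type*} [Fintype ι] [NormedAddCommGroup E] [InnerProductSpace ℝ E]
  (b : OrthonormalBasis ι ℝ E)

theorem finrank_span_image (t : Finset ι) : finrank ℝ (span ℝ (b '' t)) = t.card := by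
  rw [Set.image_eq_range]
  exact (finrank_span_eq_card (b.orthonormal.linearIndependent.comp _ Subtype.val_injective)).trans
    (by simp)

theorem inner_eq_zero_of_mem_span_image {t : Set ι} {x : E} (hx : x ∈ span ℝ (b '' t)) {i : ι}
    (hi : i ∉ t) : ⟪b i, x⟫ = 0 := by
  refine mem_orthogonal_singleton_iff_inner_right.mp (span_le.mpr ?_ hx)
  rintro _ ⟨l, hl, rfl⟩
  exact mem_orthogonal_singleton_iff_inner_right.mpr
    (b.orthonormal.inner_eq_zero (ne_of_mem_of_not_mem hl hi).symm)

end OrthonormalBasis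

theorem Matrix.inner_toEuclideanLin_toEuclideanLin {𝕜 m n : Type*} [RCLike 𝕜] [Fintype m]
    [Fintype n] [DecidableEq m] [DecidableEq n] (M : Matrix m n 𝕜) (x y : EuclideanSpace 𝕜 n) :
    ⟪toEuclideanLin M x, toEuclideanLin M y⟫_𝕜 = ⟪x, toEuclideanLin (Mᴴ * M) y⟫_𝕜 := by
  rw [← LinearMap.adjoint_inner_right, ← toEuclideanLin_conjTranspose_eq_adjoint, toLpLin_mul_same]
  rfl

theorem Matrix.norm_toEuclideanLin_of_transpose_mul_self {n : Type*} [Fintype n] [DecidableEq n]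
    {U : Matrix n n ℝ} (hU : Uᵀ * U = 1) (x : EuclideanSpace ℝ n) : ‖toEuclideanLin U x‖ = ‖x‖ := by
  rw [norm_eq_sqrt_real_inner, inner_toEuclideanLin_toEuclideanLin,
    conjTranspose_eq_transpose_of_trivial, hU]
  simp

section SingularValues

variable {m n : ℕ} (A : Matrix (Fin m) (Fin n) ℝ)

noncomputable def svIndex : Fin n ≃ Fin n :=
  Fin.revPerm.trans (Tuple.sort (isHermitian_conjTranspose_mul_self A).eigenvalues)

noncomputable def rightSingularBasis : OrthonormalBasis (Fin n) ℝ (EuclideanSpace ℝ (Fin n)) :=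
  (isHermitian_conjTranspose_mul_self A).eigenvectorBasis.reindex (svIndex A).symm

theorem sv_nonneg (j : Fin n) : 0 ≤ sv A j := Real.sqrt_nonneg _

theorem sv_sq (j : Fin n) :
    sv A j ^ 2 = (isHermitian_conjTranspose_mul_self A).eigenvalues (svIndex A j) :=
  Real.sq_sqrt (eigenvalues_conjTranspose_mul_self_nonneg A _)

theorem sv_sq_antitone : Antitone fun j => sv A j ^ 2 := fun i j hij => by
  simp only [sv_sq]
  exact Tuple.monotone_sort (isHermitian_conjTranspose_mul_self A).eigenvalues
    (Fin.rev_le_rev.mpr hij)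

theorem toEuclideanLin_conjTranspose_mul_self_rightSingularBasis (j : Fin n) :
    toEuclideanLin (Aᴴ * A) (rightSingularBasis A j) = sv A j ^ 2 • rightSingularBasis A j := by
  rw [sv_sq, rightSingularBasis, OrthonormalBasis.reindex_apply, Equiv.symm_symm, toLpLin_apply,
    (isHermitian_conjTranspose_mul_self A).mulVec_eigenvectorBasis]
  rfl

theorem norm_toEuclideanLin_sq (x : EuclideanSpace ℝ (Fin n)) :
    ‖toEuclideanLin A x‖ ^ 2 = ∑ j, sv A j ^ 2 * ⟪rightSingularBasis A j, x⟫ ^ 2 := by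
  rw [← real_inner_self_eq_norm_sq, inner_toEuclideanLin_toEuclideanLin,
    ← (rightSingularBasis A).sum_inner_mul_inner]
  refine Finset.sum_congr rfl fun j _ => ?_
  rw [← (isSymmetric_toEuclideanLin_iff.mpr (isHermitian_conjTranspose_mul_self A)),
    toEuclideanLin_conjTranspose_mul_self_rightSingularBasis, real_inner_smul_left, real_inner_comm]
  ring

theorem sv_sq_mul_norm_sq_le {j : Fin n} {x : EuclideanSpace ℝ (Fin n)}
    (hx : x ∈ span ℝ (rightSingularBasis A '' Set.Iic j)) :
    sv A j ^ 2 * ‖x‖ ^ 2 ≤ ‖toEuclideanLin A x‖ ^ 2 := by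
  rw [norm_toEuclideanLin_sq, ← (rightSingularBasis A).sum_sq_inner_right, Finset.mul_sum]
  refine Finset.sum_le_sum fun i _ => ?_
  by_cases hi : i ≤ j
  · exact mul_le_mul_of_nonneg_right (sv_sq_antitone A hi) (sq_nonneg _)
  · simp [(rightSingularBasis A).inner_eq_zero_of_mem_span_image hx hi]

theorem norm_sq_le_sv_sq_mul {j : Fin n} {x : EuclideanSpace ℝ (Fin n)}
    (hx : x ∈ span ℝ (rightSingularBasis A '' Set.Ici j)) :
    ‖toEuclideanLin A x‖ ^ 2 ≤ sv A j ^ 2 * ‖x‖ ^ 2 := by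
  rw [norm_toEuclideanLin_sq, ← (rightSingularBasis A).sum_sq_inner_right, Finset.mul_sum]
  refine Finset.sum_le_sum fun i _ => ?_
  by_cases hi : j ≤ i
  · exact mul_le_mul_of_nonneg_right (sv_sq_antitone A hi) (sq_nonneg _)
  · simp [(rightSingularBasis A).inner_eq_zero_of_mem_span_image hx hi]

theorem finrank_span_rightSingularBasis_Iic (j : Fin n) :
    finrank ℝ (span ℝ (rightSingularBasis A '' Set.Iic j)) = j + 1 := by
  rw [← Finset.coe_Iic, OrthonormalBasis.finrank_span_image, Fin.card_Iic]

theorem finrank_span_rightSingularBasis_Ici (j : Fin n) :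
    finrank ℝ (span ℝ (rightSingularBasis A '' Set.Ici j)) = n - j := by
  rw [← Finset.coe_Ici, OrthonormalBasis.finrank_span_image, Fin.card_Ici]

theorem sv_sq_le_of_forall_mem {T : Submodule ℝ (EuclideanSpace ℝ (Fin n))} {j : Fin n} {c : ℝ}
    (hT : n ≤ j + finrank ℝ T) (h : ∀ x ∈ T, ‖toEuclideanLin A x‖ ^ 2 ≤ c * ‖x‖ ^ 2) :
    sv A j ^ 2 ≤ c := by
  obtain ⟨x, hxS, hxT, hx0⟩ := exists_ne_zero_mem_of_finrank_lt (T := T)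
    (S := span ℝ (rightSingularBasis A '' Set.Iic j)) (by
      rw [finrank_span_rightSingularBasis_Iic, finrank_euclideanSpace_fin]
      omega)
  exact le_of_mul_le_mul_right ((sv_sq_mul_norm_sq_le A hxS).trans (h x hxT))
    (by positivity)

theorem le_sv_sq_of_forall_mem {S : Submodule ℝ (EuclideanSpace ℝ (Fin n))} {j : Fin n} {c : ℝ}
    (hS : j < finrank ℝ S) (h : ∀ x ∈ S, c * ‖x‖ ^ 2 ≤ ‖toEuclideanLin A x‖ ^ 2) :
    c ≤ sv A j ^ 2 := by
  obtain ⟨x, hxS, hxT, hx0⟩ := exists_ne_zero_mem_of_finrank_lt (S := S)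
    (T := span ℝ (rightSingularBasis A '' Set.Ici j)) (by
      rw [finrank_span_rightSingularBasis_Ici, finrank_euclideanSpace_fin]
      omega)
  exact le_of_mul_le_mul_right ((h x hxS).trans (norm_sq_le_sv_sq_mul A hxT)) (by positivity)

theorem sv_le_specNorm (j : Fin n) : sv A j ≤ specNorm A :=
  le_ciSup (Set.finite_range _).bddAbove j

theorem specNorm_nonneg : 0 ≤ specNorm A := Real.iSup_nonneg (sv_nonneg A)

theorem norm_toEuclideanLin_le_specNorm (x : EuclideanSpace ℝ (Fin n)) :
    ‖toEuclideanLin A x‖ ≤ specNorm A * ‖x‖ := by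
  refine (sq_le_sq₀ (norm_nonneg _) (mul_nonneg (specNorm_nonneg A) (norm_nonneg x))).mp ?_
  rw [mul_pow, norm_toEuclideanLin_sq, ← (rightSingularBasis A).sum_sq_inner_right, Finset.mul_sum]
  exact Finset.sum_le_sum fun j _ => mul_le_mul_of_nonneg_right
    (pow_le_pow_left₀ (sv_nonneg A j) (sv_le_specNorm A j) 2) (sq_nonneg _)

end SingularValues

theorem smin_le_sv {k : ℕ} (M : Matrix (Fin k) (Fin k) ℝ) (j : Fin k) : smin M ≤ sv M j :=
  ciInf_le (Set.finite_range _).bddBelow j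

theorem smin_nonneg {k : ℕ} (M : Matrix (Fin k) (Fin k) ℝ) : 0 ≤ smin M :=
  Real.iInf_nonneg (sv_nonneg M)

theorem sv_le_sv_of_norm_le {m₁ m₂ n₁ n₂ : ℕ} {A₁ : Matrix (Fin m₁) (Fin n₁) ℝ}
    {A₂ : Matrix (Fin m₂) (Fin n₂) ℝ}
    (Φ : EuclideanSpace ℝ (Fin n₁) →ₗᵢ[ℝ] EuclideanSpace ℝ (Fin n₂))
    (h : ∀ x, ‖toEuclideanLin A₁ x‖ ≤ ‖toEuclideanLin A₂ (Φ x)‖) {i : Fin n₁} {j : Fin n₂}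
    (hji : (j : ℕ) ≤ i) : sv A₁ i ≤ sv A₂ j := by
  refine (sq_le_sq₀ (sv_nonneg A₁ i) (sv_nonneg A₂ j)).mp
    (le_sv_sq_of_forall_mem A₂
      (S := (span ℝ (rightSingularBasis A₁ '' Set.Iic i)).map Φ.toLinearMap) ?_ ?_)
  · rw [← (equivMapOfInjective _ Φ.injective _).finrank_eq, finrank_span_rightSingularBasis_Iic]
    omega
  · rintro _ ⟨x, hx, rfl⟩
    calc sv A₁ i ^ 2 * ‖Φ x‖ ^ 2 = sv A₁ i ^ 2 * ‖x‖ ^ 2 := by rw [Φ.norm_map]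
      _ ≤ ‖toEuclideanLin A₁ x‖ ^ 2 := sv_sq_mul_norm_sq_le A₁ hx
      _ ≤ ‖toEuclideanLin A₂ (Φ x)‖ ^ 2 := by gcongr; exact h x

theorem sv_mul_mul_transpose {m n : ℕ} {Q : Matrix (Fin m) (Fin m) ℝ} (hQ : Qᵀ * Q = 1)
    (A : Matrix (Fin m) (Fin n) ℝ) {P : Matrix (Fin n) (Fin n) ℝ} (hP : Pᵀ * P = 1) (j : Fin n) :
    sv (Q * A * Pᵀ) j = sv A j := by
  have hPt : Pᵀᵀ * Pᵀ = 1 := by rw [transpose_transpose, mul_eq_one_comm.mp hP]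
  have hnorm (x) : ‖toEuclideanLin (Q * A * Pᵀ) x‖ = ‖toEuclideanLin A (toEuclideanLin Pᵀ x)‖ := by
    rw [toLpLin_mul_same, toLpLin_mul_same, LinearMap.comp_apply, LinearMap.comp_apply,
      norm_toEuclideanLin_of_transpose_mul_self hQ]
  apply le_antisymm
  · exact sv_le_sv_of_norm_le ⟨toEuclideanLin Pᵀ, norm_toEuclideanLin_of_transpose_mul_self hPt⟩
      (fun x => (hnorm x).le) le_rfl
  · refine sv_le_sv_of_norm_le ⟨toEuclideanLin P, norm_toEuclideanLin_of_transpose_mul_self hP⟩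
      (fun x => ?_) le_rfl
    have hPx : toEuclideanLin Pᵀ (toEuclideanLin P x) = x := by
      rw [← LinearMap.comp_apply, ← toLpLin_mul_same, hP]
      simp
    rw [LinearIsometry.coe_mk, hnorm, hPx]

section BlockLowerTriangular

open EuclideanSpace (finAddEquivProd)

variable {k r p s : ℕ} (A : Matrix (Fin k) (Fin p) ℝ) (C : Matrix (Fin r) (Fin p) ℝ)
  (D : Matrix (Fin r) (Fin s) ℝ)

theorem norm_finAddEquivProd_symm_sq (v : EuclideanSpace ℝ (Fin p))
    (w : EuclideanSpace ℝ (Fin s)) :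
    ‖(finAddEquivProd.symm (v, w) : EuclideanSpace ℝ (Fin (p + s)))‖ ^ 2 = ‖v‖ ^ 2 + ‖w‖ ^ 2 := by
  rw [EuclideanSpace.norm_sq_eq, Fin.sum_univ_add, EuclideanSpace.norm_sq_eq,
    EuclideanSpace.norm_sq_eq]
  simp

theorem toEuclideanLin_blockLower_finAddEquivProd_symm (v : EuclideanSpace ℝ (Fin p))
    (w : EuclideanSpace ℝ (Fin s)) :
    toEuclideanLin (reindex finSumFinEquiv finSumFinEquiv (fromBlocks A 0 C D))
        (finAddEquivProd.symm (v, w)) =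
      finAddEquivProd.symm (toEuclideanLin A v, toEuclideanLin C v + toEuclideanLin D w) := by
  ext i
  refine Fin.addCases (fun a => ?_) (fun c => ?_) i <;> simp [mulVec, dotProduct]

theorem norm_toEuclideanLin_blockLower_sq (v : EuclideanSpace ℝ (Fin p))
    (w : EuclideanSpace ℝ (Fin s)) :
    ‖toEuclideanLin (reindex finSumFinEquiv finSumFinEquiv (fromBlocks A 0 C D))
        (finAddEquivProd.symm (v, w))‖ ^ 2 =
      ‖toEuclideanLin A v‖ ^ 2 + ‖toEuclideanLin C v + toEuclideanLin D w‖ ^ 2 := by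
  rw [toEuclideanLin_blockLower_finAddEquivProd_symm, norm_finAddEquivProd_symm_sq]

theorem sv_le_sv_blockLower (j : Fin p) :
    sv A j ≤ sv (reindex finSumFinEquiv finSumFinEquiv (fromBlocks A 0 C D)) (Fin.castAdd s j) := by
  let Φ : EuclideanSpace ℝ (Fin p) →ₗᵢ[ℝ] EuclideanSpace ℝ (Fin (p + s)) :=
    ⟨finAddEquivProd.symm.toLinearMap ∘ₗ LinearMap.inl ℝ _ _, fun v => by simp⟩
  refine sv_le_sv_of_norm_le Φ (fun v => ?_) le_rfl
  refine (sq_le_sq₀ (norm_nonneg _) (norm_nonneg _)).mp ?_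
  change _ ≤ ‖toEuclideanLin _ (finAddEquivProd.symm (v, 0))‖ ^ 2
  rw [norm_toEuclideanLin_blockLower_sq]
  exact le_add_of_nonneg_right (sq_nonneg _)

theorem sv_sq_blockLower_le {j : Fin p} {γ : ℝ} (hγ : 0 ≤ γ) (hγj : γ ≤ sv A j)
    (hCD : specNorm C ^ 2 < γ ^ 2 - specNorm D ^ 2) :
    sv (reindex finSumFinEquiv finSumFinEquiv (fromBlocks A 0 C D)) (Fin.castAdd s j) ^ 2 ≤
      sv A j ^ 2 * (γ ^ 2 - specNorm D ^ 2) / (γ ^ 2 - specNorm D ^ 2 - specNorm C ^ 2) := by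
  let V := span ℝ (rightSingularBasis A '' Set.Ici j)
  let Ψ : V × EuclideanSpace ℝ (Fin s) →ₗ[ℝ] EuclideanSpace ℝ (Fin (p + s)) :=
    finAddEquivProd.symm.toLinearMap ∘ₗ V.subtype.prodMap LinearMap.id
  have hΨ : Function.Injective Ψ :=
    finAddEquivProd.symm.injective.comp (V.injective_subtype.prodMap Function.injective_id)
  refine sv_sq_le_of_forall_mem _ (T := LinearMap.range Ψ) ?_ ?_
  · rw [LinearMap.finrank_range_of_inj hΨ, finrank_prod, finrank_span_rightSingularBasis_Ici,
      finrank_euclideanSpace_fin, Fin.val_castAdd]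
    omega
  · rintro _ ⟨⟨⟨v, hv⟩, w⟩, rfl⟩
    change ‖toEuclideanLin _ (finAddEquivProd.symm (v, w))‖ ^ 2 ≤
      _ * ‖(finAddEquivProd.symm (v, w) : EuclideanSpace ℝ (Fin (p + s)))‖ ^ 2
    rw [norm_toEuclideanLin_blockLower_sq, norm_finAddEquivProd_symm_sq]
    have hCDvw : ‖toEuclideanLin C v + toEuclideanLin D w‖ ≤ specNorm C * ‖v‖ + specNorm D * ‖w‖ :=
      (norm_add_le _ _).trans (add_le_add (norm_toEuclideanLin_le_specNorm C v)
        (norm_toEuclideanLin_le_specNorm D w))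
    calc ‖toEuclideanLin A v‖ ^ 2 + ‖toEuclideanLin C v + toEuclideanLin D w‖ ^ 2
        ≤ sv A j ^ 2 * ‖v‖ ^ 2 + (specNorm C * ‖v‖ + specNorm D * ‖w‖) ^ 2 :=
          add_le_add (norm_sq_le_sv_sq_mul A hv) (pow_le_pow_left₀ (norm_nonneg _) hCDvw 2)
      _ ≤ _ := sq_mul_add_sq_le (pow_le_pow_left₀ hγ hγj 2) hCD

end BlockLowerTriangular

theorem stmt16_general {k r s : ℕ}
    (B : Matrix (Fin (k + r)) (Fin (k + s)) ℝ)
    (L11 : Matrix (Fin k) (Fin k) ℝ) (L21 : Matrix (Fin r) (Fin k) ℝ)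
    (L22 : Matrix (Fin r) (Fin s) ℝ)
    (L : Matrix (Fin (k + r)) (Fin (k + s)) ℝ)
    (hL : L = Matrix.reindex finSumFinEquiv finSumFinEquiv
      (Matrix.fromBlocks L11 0 L21 L22))
    (Q : Matrix (Fin (k + r)) (Fin (k + r)) ℝ) (hQ : Qᵀ * Q = 1)
    (P : Matrix (Fin (k + s)) (Fin (k + s)) ℝ) (hP : Pᵀ * P = 1)
    (hB : B = Q * L * Pᵀ)
    (hsmall : specNorm L21 ^ 2 < (1 - (specNorm L22 / smin L11) ^ 2) * smin L11 ^ 2)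
    (j : Fin k) :
    Real.sqrt (1 - specNorm L21 ^ 2 /
        ((1 - (specNorm L22 / smin L11) ^ 2) * smin L11 ^ 2))
      ≤ sv L11 j / sv B (Fin.castAdd s j) := by
  have hγ : 0 < smin L11 := (smin_nonneg L11).lt_of_ne' fun h => by
    rw [h] at hsmall
    nlinarith
  have hγβ : (1 - (specNorm L22 / smin L11) ^ 2) * smin L11 ^ 2 =
      smin L11 ^ 2 - specNorm L22 ^ 2 := by
    field_simp
  rw [hγβ] at hsmall ⊢
  have hBL : sv B (Fin.castAdd s j) = sv L (Fin.castAdd s j) := by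
    rw [hB, sv_mul_mul_transpose hQ L hP]
  subst hL
  refine sqrt_one_sub_div_le_div (sv_nonneg L11 j) ?_ (sq_nonneg _) hsmall ?_
  · rw [hBL]
    exact hγ.trans_le ((smin_le_sv L11 j).trans (sv_le_sv_blockLower L11 L21 L22 j))
  · rw [hBL]
    exact sv_sq_blockLower_le L11 L21 L22 hγ.le (smin_le_sv L11 j) hsmall

/-- Mathias–Stewart bound: for B orthogonally equivalent to the lower triangular
L = [[L₁₁,0],[L₂₁,L₂₂]], σ_j(L₁₁)/σ_j(B) ≥ √(1 - ‖L₂₁‖₂²/((1-ρ²)γ²)). -/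
theorem stmt16 {k r s : ℕ} [NeZero k]
    (B : Matrix (Fin (k + r)) (Fin (k + s)) ℝ)
    (L11 : Matrix (Fin k) (Fin k) ℝ) (L21 : Matrix (Fin r) (Fin k) ℝ)
    (L22 : Matrix (Fin r) (Fin s) ℝ)
    (L : Matrix (Fin (k + r)) (Fin (k + s)) ℝ)
    (hL : L = Matrix.reindex finSumFinEquiv finSumFinEquiv
      (Matrix.fromBlocks L11 0 L21 L22))
    (hLtri : ∀ (i : Fin (k + r)) (j : Fin (k + s)), (i : ℕ) < (j : ℕ) → L i j = 0)
    (Q : Matrix (Fin (k + r)) (Fin (k + r)) ℝ) (hQ : Qᵀ * Q = 1)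
    (P : Matrix (Fin (k + s)) (Fin (k + s)) ℝ) (hP : Pᵀ * P = 1)
    (hB : B = Q * L * Pᵀ)
    (hrho : specNorm L22 / smin L11 < 1)
    (hsmall : specNorm L21 ^ 2 < (1 - (specNorm L22 / smin L11) ^ 2) * smin L11 ^ 2)
    (j : Fin k) :
    Real.sqrt (1 - specNorm L21 ^ 2 /
        ((1 - (specNorm L22 / smin L11) ^ 2) * smin L11 ^ 2))
      ≤ sv L11 j / sv B (Fin.castAdd s j) :=
  stmt16_general B L11 L21 L22 L hL Q hQ P hP hB hsmall j
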